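/- arXiv:1409.6827 — 5 statements merged into one kernel-verified Lean document; each statement's English description precedes it below -/
import Mathlib

section
/- Let p be a prime and let g be a Fibonacci primitive root modulo p, i.e., g is a primitive root modulo p satisfying g^2 = g + 1 in ZMod p. Then g - 1 is a primitive root modulo p and satisfies (g-1)^2 + (g-1) = 1 in ZMod p. -/
theorem fpr_shift_is_primitive_root (p : ℕ) (hp : p.Prime) (g : ZMod p)
    (hg : orderOf g = p - 1) (hfib : g ^ 2 = g + 1) :
    orderOf (g - 1) = p - 1 ∧ (g - 1) ^ 2 + (g - 1) = 1 := by
  have : Fact p.Prime := ⟨hp⟩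
  have h1 : (g - 1) * g = 1 := by linear_combination hfib
  have h2 : g * (g - 1) = 1 := by linear_combination hfib
  set v : (ZMod p)ˣ := ⟨g, g - 1, h2, h1⟩ with hv
  have e1 : orderOf (((v⁻¹ : (ZMod p)ˣ) : ZMod p)) = orderOf (v⁻¹ : (ZMod p)ˣ) := orderOf_units
  have hcoe : ((v⁻¹ : (ZMod p)ˣ) : ZMod p) = g - 1 := rfl
  have e2 : orderOf ((v : ZMod p)) = orderOf v := orderOf_units
  have hcoe2 : ((v : (ZMod p)ˣ) : ZMod p) = g := rfl
  rw [hcoe2] at e2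
  rw [e2] at hg
  rw [hcoe] at e1
  exact ⟨by rw [e1, orderOf_inv, hg], by linear_combination hfib⟩
end

section
/- Let p be a prime and let α be a primitive root modulo p satisfying α^2 + α = 1 in ZMod p. Then α + 1 is a Fibonacci primitive root modulo p, i.e., α + 1 is a primitive root modulo p satisfying (α+1)^2 = (α+1) + 1 in ZMod p. -/
theorem t4_root_shift_is_fpr (p : ℕ) (hp : p.Prime) (α : ZMod p)
    (hα : orderOf α = p - 1) (heq : α ^ 2 + α = 1) :
    orderOf (α + 1) = p - 1 ∧ (α + 1) ^ 2 = (α + 1) + 1 := by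
  have hmul : α * (α + 1) = 1 := by ring_nf; linear_combination heq
  have hmul' : (α + 1) * α = 1 := by linear_combination hmul
  set u : (ZMod p)ˣ := ⟨α, α + 1, hmul, hmul'⟩ with hu
  have h1 : orderOf (u : ZMod p) = orderOf u := orderOf_units
  have h2 : orderOf ((u⁻¹ : (ZMod p)ˣ) : ZMod p) = orderOf u⁻¹ := orderOf_units
  have h3 : ((u⁻¹ : (ZMod p)ˣ) : ZMod p) = α + 1 := rfl
  constructor
  · rw [← h3, h2, orderOf_inv, ← h1]
    exact hα
  · linear_combination heq
end

section
/- Let i be a positive natural number and let p be a prime with p > 3i + 1. Then there is no primitive root α modulo p satisfying α^((p-1)/2 + i) + α^((p-1)/2 + 2i) = 1 in ZMod p. -/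
theorem no_primitive_root_shifted_pair (i : ℕ) (hi : 0 < i) (p : ℕ)
    (hp : p.Prime) (hbig : 3 * i + 1 < p) :
    ¬ ∃ α : ZMod p, orderOf α = p - 1 ∧
      α ^ ((p - 1) / 2 + i) + α ^ ((p - 1) / 2 + 2 * i) = 1 := by
  rintro ⟨α, hord, heq⟩
  haveI : Fact p.Prime := ⟨hp⟩
  have hodd : Odd p := hp.odd_of_ne_two (by omega)
  have h2 : 2 ∣ p - 1 := by
    obtain ⟨k, hk⟩ := hodd
    omega
  have hdiv : (p - 1) / 2 * 2 = p - 1 := Nat.div_mul_cancel h2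
  have hα1 : α ^ (p - 1) = 1 := by rw [← hord]; exact pow_orderOf_eq_one α
  -- α^((p-1)/2) = -1
  have hsq : α ^ ((p - 1) / 2) * α ^ ((p - 1) / 2) = 1 := by
    rw [← pow_add]
    have : (p - 1) / 2 + (p - 1) / 2 = p - 1 := by omega
    rw [this, hα1]
  have hne1 : α ^ ((p - 1) / 2) ≠ 1 := by
    intro h
    have hd := orderOf_dvd_of_pow_eq_one h
    rw [hord] at hd
    have := Nat.le_of_dvd (by omega) hd
    omega
  have hhalf : α ^ ((p - 1) / 2) = -1 := by
    rcases mul_self_eq_one_iff.mp hsq with h | h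
    · exact absurd h hne1
    · exact h
  rw [pow_add, pow_add, hhalf] at heq
  set x := α ^ i with hx
  have h2i : α ^ (2 * i) = x ^ 2 := by rw [two_mul, pow_add, sq]
  rw [h2i] at heq
  -- heq : -1 * x + -1 * x^2 = 1, so x^2 + x + 1 = 0
  have hcube : x ^ 3 = 1 := by linear_combination (1 - x) * heq
  have hd : orderOf α ∣ 3 * i := by
    apply orderOf_dvd_of_pow_eq_one
    rw [mul_comm, pow_mul, ← hx, hcube]
  rw [hord] at hd
  have := Nat.le_of_dvd (by omega) hd
  omega
end

section
/- Let i be a positive natural number and let p be a prime with p > 6i + 1. Then there is no primitive root α modulo p satisfying α^i + α^(2i + (p-1)/2) = 1 in ZMod p. -/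
theorem no_primitive_root_mixed_pair (i : ℕ) (hi : 0 < i) (p : ℕ)
    (hp : p.Prime) (hbig : 6 * i + 1 < p) :
    ¬ ∃ α : ZMod p, orderOf α = p - 1 ∧
      α ^ i + α ^ (2 * i + (p - 1) / 2) = 1 := by
  haveI : Fact p.Prime := ⟨hp⟩
  rintro ⟨α, hord, heq⟩
  have hodd : p % 2 = 1 := by
    rcases Nat.mod_two_eq_zero_or_one p with h2 | h2
    · exfalso
      have : (2 : ℕ) ∣ p := Nat.dvd_of_mod_eq_zero h2
      rcases (Nat.Prime.eq_one_or_self_of_dvd hp 2 this) with h3 | h3 <;> omega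
    · exact h2
  have hhalf : (p - 1) / 2 * 2 = p - 1 := by omega
  -- α^((p-1)/2) = -1
  have hpow1 : α ^ (p - 1) = 1 := by
    rw [← hord]; exact pow_orderOf_eq_one α
  have hsq : α ^ ((p - 1) / 2) * α ^ ((p - 1) / 2) = 1 := by
    rw [← pow_add]
    have : (p - 1) / 2 + (p - 1) / 2 = p - 1 := by omega
    rw [this, hpow1]
  have hne1 : α ^ ((p - 1) / 2) ≠ 1 := by
    intro h
    have hdvd : orderOf α ∣ (p - 1) / 2 := orderOf_dvd_of_pow_eq_one h
    rw [hord] at hdvd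
    have : p - 1 ≤ (p - 1) / 2 := Nat.le_of_dvd (by omega) hdvd
    omega
  have hneg : α ^ ((p - 1) / 2) = -1 := by
    rcases mul_self_eq_one_iff.mp hsq with h | h
    · exact absurd h hne1
    · exact h
  -- rewrite the equation
  have heq' : α ^ i - (α ^ i) ^ 2 = 1 := by
    have h1 : α ^ (2 * i + (p - 1) / 2) = -(α ^ i) ^ 2 := by
      rw [pow_add, hneg, ← pow_mul]
      ring_nf
    rw [h1] at heq
    linear_combination heq
  have hx6 : (α ^ i) ^ 6 = 1 := by
    linear_combination (-((α ^ i) + 1) * ((α ^ i) ^ 3 - 1)) * heq'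
  have h6i : α ^ (6 * i) = 1 := by
    rw [mul_comm, pow_mul]; exact hx6
  have hdvd : p - 1 ∣ 6 * i := by
    rw [← hord]; exact orderOf_dvd_of_pow_eq_one h6i
  have : p - 1 ≤ 6 * i := Nat.le_of_dvd (by omega) hdvd
  omega
end

section
/- Let i be a positive natural number and let p be a prime with p > 6i + 1. Then there is no primitive root α modulo p satisfying α^i + α^(p - 1 - i) = 1 in ZMod p. -/
theorem no_primitive_root_complement_pair (i : ℕ) (hi : 0 < i) (p : ℕ)
    (hp : p.Prime) (hbig : 6 * i + 1 < p) :
    ¬ ∃ α : ZMod p, orderOf α = p - 1 ∧ α ^ i + α ^ (p - 1 - i) = 1 := by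
  rintro ⟨α, hord, heq⟩
  have hp1 : α ^ (p - 1) = 1 := by rw [← hord]; exact pow_orderOf_eq_one α
  have hile : i ≤ p - 1 := by omega
  have h2 : α ^ i * α ^ i + 1 = α ^ i := by
    have h := congrArg (· * α ^ i) heq
    simp only [add_mul, one_mul] at h
    rw [← pow_add, ← pow_add, Nat.sub_add_cancel hile, hp1] at h
    rw [← pow_add]
    exact h
  set x := α ^ i with hx
  have h3 : x ^ 3 = -1 := by
    have : x * x = x - 1 := by linear_combination h2
    calc x ^ 3 = x * (x * x) := by ring
    _ = x * (x - 1) := by rw [this]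
    _ = x * x - x := by ring
    _ = (x - 1) - x := by rw [this]
    _ = -1 := by ring
  have h6 : α ^ (6 * i) = 1 := by
    have : (x ^ 3) ^ 2 = 1 := by rw [h3]; ring
    rw [hx, ← pow_mul, ← pow_mul] at this
    rw [show 6 * i = i * (3 * 2) by ring]
    exact this
  have hdvd : p - 1 ∣ 6 * i := by rw [← hord]; exact orderOf_dvd_of_pow_eq_one h6
  have := Nat.le_of_dvd (by omega) hdvd
  omega
end
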